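/- For any nonzero z ∈ ℂⁿ and any h > 0, the equation 2π·(|z|²/(1 − cos(2πs)))·(s − sin(2πs)/(2π)) = h has a unique solution s₀ ∈ (0,1). -/

import Mathlib

open Real Set Filter Topology

/-!
With `t = 2πs` the equation reads `f t = h / ‖z‖²` for `f t = (t - sin t) / (1 - cos t)`.
The numerator of `f'` is `2 - 2 cos t - t sin t = 4 sin (t/2) (sin (t/2) - (t/2) cos (t/2))`,
positive on `(0, 2π)` because `u cos u < sin u` on `(0, π)`; so `f` is strictly increasing there.
The same inequality gives `0 < f t < t` near `0`, while `f t → ∞` as `t → 2π` since the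
denominator vanishes; by the intermediate value theorem `f` takes every positive value exactly once.
-/

lemma Real.mul_cos_lt_sin {u : ℝ} (h₀ : 0 < u) (hπ : u < π) : u * cos u < sin u := by
  rcases lt_or_ge u (π / 2) with hu | hu
  · have hcos : 0 < cos u := cos_pos_of_mem_Ioo ⟨by linarith, hu⟩
    have := lt_tan h₀ hu
    rwa [tan_eq_sin_div_cos, lt_div_iff₀ hcos] at this
  · have hcos : cos u ≤ 0 := cos_nonpos_of_pi_div_two_le_of_le hu (by linarith)
    nlinarith [sin_pos_of_pos_of_lt_pi h₀ hπ]

lemma Real.one_sub_cos_eq_two_mul_sin_half_sq (t : ℝ) : 1 - cos t = 2 * sin (t / 2) ^ 2 := by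
  rw [sin_sq_eq_half_sub, mul_div_cancel₀ t two_ne_zero]; ring

lemma Real.one_sub_cos_pos {t : ℝ} (h₀ : 0 < t) (h₂π : t < 2 * π) : 0 < 1 - cos t := by
  rw [one_sub_cos_eq_two_mul_sin_half_sq]
  have := sin_pos_of_pos_of_lt_pi (half_pos h₀) (by linarith)
  positivity

/-- The paper's `H(s)` is `cycloidRatio (2 * π * s)`; `t - sin t` and `1 - cos t` are the
coordinates of the cycloid. -/
noncomputable def cycloidRatio (t : ℝ) : ℝ := (t - sin t) / (1 - cos t)

lemma two_sub_two_mul_cos_sub_mul_sin_pos {t : ℝ} (h₀ : 0 < t) (h₂π : t < 2 * π) :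
    0 < 2 - 2 * cos t - t * sin t := by
  have htwice : t = 2 * (t / 2) := by ring
  have hhalf : 2 - 2 * cos t - t * sin t
      = 4 * sin (t / 2) * (sin (t / 2) - t / 2 * cos (t / 2)) := by
    rw [htwice, sin_two_mul, cos_two_mul, ← htwice]
    linear_combination (-4) * sin_sq_add_cos_sq (t / 2)
  rw [hhalf]
  have hsin := sin_pos_of_pos_of_lt_pi (half_pos h₀) (by linarith)
  have hgap := sub_pos.2 (mul_cos_lt_sin (half_pos h₀) (by linarith))
  positivity

lemma hasDerivAt_cycloidRatio {t : ℝ} (h₀ : 0 < t) (h₂π : t < 2 * π) :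
    HasDerivAt cycloidRatio ((2 - 2 * cos t - t * sin t) / (1 - cos t) ^ 2) t := by
  refine (((hasDerivAt_id t).sub (hasDerivAt_sin t)).div ((hasDerivAt_cos t).const_sub 1)
    (one_sub_cos_pos h₀ h₂π).ne').congr_deriv ?_
  simp only [Pi.sub_apply, id_eq]
  congr 1
  linear_combination sin_sq_add_cos_sq t

lemma continuousOn_cycloidRatio : ContinuousOn cycloidRatio (Ioo 0 (2 * π)) :=
  fun _ ht => (hasDerivAt_cycloidRatio ht.1 ht.2).continuousAt.continuousWithinAt

lemma strictMonoOn_cycloidRatio : StrictMonoOn cycloidRatio (Ioo 0 (2 * π)) := by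
  refine strictMonoOn_of_deriv_pos (convex_Ioo 0 (2 * π)) continuousOn_cycloidRatio ?_
  intro t ht
  rw [interior_Ioo] at ht
  rw [(hasDerivAt_cycloidRatio ht.1 ht.2).deriv]
  exact div_pos (two_sub_two_mul_cos_sub_mul_sin_pos ht.1 ht.2)
    (pow_pos (one_sub_cos_pos ht.1 ht.2) 2)

lemma cycloidRatio_pos {t : ℝ} (h₀ : 0 < t) (h₂π : t < 2 * π) : 0 < cycloidRatio t :=
  div_pos (sub_pos.2 (sin_lt h₀)) (one_sub_cos_pos h₀ h₂π)

lemma cycloidRatio_lt_self {t : ℝ} (h₀ : 0 < t) (hπ : t < π) : cycloidRatio t < t := by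
  rw [cycloidRatio, div_lt_iff₀ (one_sub_cos_pos h₀ (by linarith))]
  linarith [mul_cos_lt_sin h₀ hπ]

lemma tendsto_cycloidRatio_nhdsGT_zero : Tendsto cycloidRatio (𝓝[>] 0) (𝓝 0) := by
  have hmem : Ioo 0 π ∈ 𝓝[>] (0 : ℝ) := Ioo_mem_nhdsGT pi_pos
  refine tendsto_of_tendsto_of_tendsto_of_le_of_le' tendsto_const_nhds
    (tendsto_nhdsWithin_of_tendsto_nhds tendsto_id) ?_ ?_
  · filter_upwards [hmem] with t ht using (cycloidRatio_pos ht.1 (by linarith [ht.2, pi_pos])).le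
  · filter_upwards [hmem] with t ht using (cycloidRatio_lt_self ht.1 ht.2).le

lemma tendsto_cycloidRatio_nhdsLT_two_pi : Tendsto cycloidRatio (𝓝[<] (2 * π)) atTop := by
  have hnum : Tendsto (fun t => t - sin t) (𝓝[<] (2 * π)) (𝓝 (2 * π)) := by
    have : Continuous (fun t => t - sin t) := by fun_prop
    simpa using (this.tendsto (2 * π)).mono_left nhdsWithin_le_nhds
  have hden : Tendsto (fun t => 1 - cos t) (𝓝[<] (2 * π)) (𝓝[>] 0) := by
    refine tendsto_nhdsWithin_iff.2 ⟨?_, ?_⟩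
    · have : Continuous (fun t => 1 - cos t) := by fun_prop
      simpa using (this.tendsto (2 * π)).mono_left nhdsWithin_le_nhds
    · filter_upwards [Ioo_mem_nhdsLT (by linarith [pi_pos] : π < 2 * π)] with t ht
      exact one_sub_cos_pos (by linarith [ht.1, pi_pos]) ht.2
  exact hnum.pos_mul_atTop two_pi_pos (tendsto_inv_nhdsGT_zero.comp hden)

lemma surjOn_cycloidRatio : SurjOn cycloidRatio (Ioo 0 (2 * π)) (Ioi 0) := by
  intro y (hy : 0 < y)
  obtain ⟨a, hfa, ha⟩ := ((tendsto_cycloidRatio_nhdsGT_zero.eventually (gt_mem_nhds hy)).and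
    (Ioo_mem_nhdsGT two_pi_pos)).exists
  obtain ⟨b, hfb, hb⟩ :=
    ((tendsto_cycloidRatio_nhdsLT_two_pi.eventually (eventually_gt_atTop y)).and
      (Ioo_mem_nhdsLT two_pi_pos)).exists
  exact continuousOn_cycloidRatio.surjOn_Icc ha hb ⟨hfa.le, hfb.le⟩

/-- For nonzero `z ∈ ℂⁿ` and `h > 0`, the equation
`2π·(|z|²/(1 − cos 2πs))·(s − sin(2πs)/(2π)) = h` has a unique solution
`s₀ ∈ (0,1)`. -/
theorem exists_unique_geodesic_parameter
    (n : ℕ) (z : EuclideanSpace ℂ (Fin n)) (hz : z ≠ 0) (h : ℝ) (hh : 0 < h) :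
    ∃! s₀ : ℝ, s₀ ∈ Set.Ioo (0:ℝ) 1 ∧
      2 * π * (‖z‖ ^ 2 / (1 - Real.cos (2 * π * s₀)))
        * (s₀ - Real.sin (2 * π * s₀) / (2 * π)) = h := by
  have hc : 0 < ‖z‖ ^ 2 := by have := norm_pos_iff.2 hz; positivity
  have hequation : ∀ s : ℝ, 2 * π * (‖z‖ ^ 2 / (1 - cos (2 * π * s)))
      * (s - sin (2 * π * s) / (2 * π)) = cycloidRatio (2 * π * s) * ‖z‖ ^ 2 := by
    intro s
    rw [cycloidRatio]
    field_simp
  have hscale : ∀ s : ℝ, s ∈ Ioo (0 : ℝ) 1 ↔ 2 * π * s ∈ Ioo 0 (2 * π) := by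
    intro s
    simp only [mem_Ioo, mul_pos_iff_of_pos_left two_pi_pos, mul_lt_iff_lt_one_right two_pi_pos]
  simp only [hequation, ← eq_div_iff hc.ne', hscale]
  obtain ⟨t, ht, hft⟩ := surjOn_cycloidRatio (div_pos hh hc : 0 < h / ‖z‖ ^ 2)
  have ht' : 2 * π * (t / (2 * π)) = t := mul_div_cancel₀ t two_pi_pos.ne'
  refine ⟨t / (2 * π), by simpa only [ht'] using ⟨ht, hft⟩, fun s ⟨hs, hfs⟩ => ?_⟩
  rw [eq_div_iff two_pi_pos.ne', mul_comm]
  exact strictMonoOn_cycloidRatio.injOn hs ht (hfs.trans hft.symm)
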